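/- Generalized Second Law with memory: let ρ_{SRM} = ρ_{SM} ⊗ ρ_R be a state of three finite-dimensional systems with the reservoir R uncorrelated, and let ρ'_{SRM} = U ρ_{SRM} U† for a unitary U. If S(ρ'_M) ≤ S(ρ_M), then the reservoir entropy increase Δ = S(ρ'_R) − S(ρ_R) satisfies Δ ≥ ΔS_cond + I(S'M':R') ≥ ΔS_cond, where ΔS_cond := S(S|M)_{ρ_{SM}} − S(S'|M')_{ρ'_{SM}} is the decrease of conditional entropy. -/

import Mathlib

open scoped Kronecker ComplexOrder
open Matrix

noncomputable def matfun {n : Type*} [Fintype n] [DecidableEq n] (f : ℝ → ℝ)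
    (A : Matrix n n ℂ) : Matrix n n ℂ :=
  if h : A.IsHermitian then
    (h.eigenvectorUnitary : Matrix n n ℂ) * Matrix.diagonal (fun i => (f (h.eigenvalues i) : ℂ)) *
      (star (h.eigenvectorUnitary : Matrix n n ℂ))
  else 0

noncomputable def mlog {n : Type*} [Fintype n] [DecidableEq n] (A : Matrix n n ℂ) : Matrix n n ℂ :=
  matfun Real.log A

noncomputable def mexp {n : Type*} [Fintype n] [DecidableEq n] (β : ℝ) (H : Matrix n n ℂ) : Matrix n n ℂ :=
  matfun (fun x => Real.exp (-β * x)) H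

noncomputable def gibbs {n : Type*} [Fintype n] [DecidableEq n] (β : ℝ) (H : Matrix n n ℂ) : Matrix n n ℂ :=
  ((mexp β H).trace)⁻¹ • mexp β H

noncomputable def entropy {n : Type*} [Fintype n] [DecidableEq n] (ρ : Matrix n n ℂ) : ℝ :=
  -((ρ * mlog ρ).trace).re

noncomputable def relEnt {n : Type*} [Fintype n] [DecidableEq n] (σ ρ : Matrix n n ℂ) : ℝ :=
  ((σ * (mlog σ - mlog ρ)).trace).re

def IsState {n : Type*} [Fintype n] (ρ : Matrix n n ℂ) : Prop := ρ.PosSemidef ∧ ρ.trace = 1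

noncomputable def trR {a b : Type*} [Fintype a] [Fintype b]
    (ρ : Matrix (a × b) (a × b) ℂ) : Matrix a a ℂ :=
  Matrix.of fun i j => ∑ k, ρ (i, k) (j, k)

noncomputable def trL {a b : Type*} [Fintype a] [Fintype b]
    (ρ : Matrix (a × b) (a × b) ℂ) : Matrix b b ℂ :=
  Matrix.of fun i j => ∑ k, ρ (k, i) (k, j)

noncomputable def mutInfo {a b : Type*} [Fintype a] [Fintype b] [DecidableEq a] [DecidableEq b]
    (ρ : Matrix (a × b) (a × b) ℂ) : ℝ :=
  entropy (trR ρ) + entropy (trL ρ) - entropy ρ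

/-!
Unitary invariance and additivity of the von Neumann entropy give `S(ρ') = S(ρ_SM) + S(ρ_R)`, and
subadditivity gives `I(S'M' : R') ≥ 0`; together with `S(M') ≤ S(M)` the two inequalities are
linear arithmetic. For subadditivity, conjugate `ρ` by the tensor product of eigenbases of its
marginals, which makes both marginals diagonal. The entropy of a state is at most the Shannon
entropy of its diagonal (the squared moduli of a unitary form a doubly stochastic matrix and
`x ↦ -x log x` is concave), and Shannon entropy is subadditive by Gibbs' inequality.
-/

open Real

section Shannon

variable {ι κ : Type*} [Fintype ι] [Fintype κ]

lemma sum_negMulLog_mul {p : ι → ℝ} {q : κ → ℝ} (hp : ∑ i, p i = 1) (hq : ∑ j, q j = 1) :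
    ∑ x : ι × κ, negMulLog (p x.1 * q x.2) = ∑ i, negMulLog (p i) + ∑ j, negMulLog (q j) := by
  simp only [Fintype.sum_prod_type, negMulLog_mul, Finset.sum_add_distrib, ← Finset.sum_mul,
    ← Finset.mul_sum, hp, hq, one_mul]

lemma sum_negMulLog_le_sum_negMulLog_mulVec [DecidableEq ι] {M : Matrix ι ι ℝ}
    (hM : M ∈ doublyStochastic ℝ ι) {x : ι → ℝ} (hx : ∀ i, 0 ≤ x i) :
    ∑ j, negMulLog (x j) ≤ ∑ i, negMulLog ((M *ᵥ x) i) := by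
  obtain ⟨hM0, hrow, hcol⟩ := mem_doublyStochastic_iff_sum.mp hM
  calc ∑ j, negMulLog (x j) = ∑ i, ∑ j, M i j * negMulLog (x j) := by
        rw [Finset.sum_comm]
        simp only [← Finset.sum_mul, hcol, one_mul]
    _ ≤ ∑ i, negMulLog ((M *ᵥ x) i) := by
        gcongr with i
        simpa [mulVec, dotProduct] using concaveOn_negMulLog.le_map_sum
          (fun j _ => hM0 i j) (hrow i) (fun j _ => Set.mem_Ici.mpr (hx j))

lemma sum_negMulLog_le_neg_sum_mul_log {p q : ι → ℝ} (hp : ∀ i, 0 ≤ p i) (hq : ∀ i, 0 ≤ q i)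
    (hpq : ∀ i, 0 < p i → 0 < q i) (hsum : ∑ i, q i ≤ ∑ i, p i) :
    ∑ i, negMulLog (p i) ≤ -∑ i, p i * log (q i) := by
  have hterm : ∀ i, p i * log (q i) + negMulLog (p i) ≤ q i - p i := by
    intro i
    rcases (hp i).eq_or_lt with h0 | hpos
    · simp [← h0, hq i]
    · have hqpos := hpq i hpos
      have hlog := log_le_sub_one_of_pos (div_pos hqpos hpos)
      rw [log_div hqpos.ne' hpos.ne'] at hlog
      have hmul := mul_le_mul_of_nonneg_left hlog hpos.le
      rw [mul_sub, mul_sub, mul_div_cancel₀ _ hpos.ne', mul_one] at hmul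
      rw [negMulLog]
      linarith
  have hsum_term := Finset.sum_le_sum fun i (_ : i ∈ Finset.univ) => hterm i
  rw [Finset.sum_add_distrib, Finset.sum_sub_distrib] at hsum_term
  linarith

lemma sum_negMulLog_le_add_marginals {p : ι × κ → ℝ} (hp : ∀ x, 0 ≤ p x) (hp1 : ∑ x, p x = 1) :
    ∑ x, negMulLog (p x) ≤
      ∑ i, negMulLog (∑ j, p (i, j)) + ∑ j, negMulLog (∑ i, p (i, j)) := by
  set q : ι → ℝ := fun i => ∑ j, p (i, j)
  set r : κ → ℝ := fun j => ∑ i, p (i, j)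
  have hq1 : ∑ i, q i = 1 := by rw [← hp1, Fintype.sum_prod_type]
  have hr1 : ∑ j, r j = 1 := by rw [← hp1, Fintype.sum_prod_type_right]
  have hq0 : ∀ x, 0 < p x → 0 < q x.1 := fun x hx =>
    hx.trans_le (Finset.single_le_sum (fun j _ => hp (x.1, j)) (Finset.mem_univ x.2))
  have hr0 : ∀ x, 0 < p x → 0 < r x.2 := fun x hx =>
    hx.trans_le (Finset.single_le_sum (fun i _ => hp (i, x.2)) (Finset.mem_univ x.1))
  calc ∑ x, negMulLog (p x) ≤ -∑ x, p x * log (q x.1 * r x.2) :=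
        sum_negMulLog_le_neg_sum_mul_log hp
          (fun x => mul_nonneg (Finset.sum_nonneg fun j _ => hp _)
            (Finset.sum_nonneg fun i _ => hp _))
          (fun x hx => mul_pos (hq0 x hx) (hr0 x hx))
          (by rw [Fintype.sum_prod_type, ← Finset.sum_mul_sum, hq1, hr1, hp1, one_mul])
    _ = -∑ x, (p x * log (q x.1) + p x * log (r x.2)) := by
        congr 1
        refine Finset.sum_congr rfl fun x _ => ?_
        rcases (hp x).eq_or_lt with h0 | hpos
        · simp [← h0]
        · rw [← mul_add, log_mul (hq0 x hpos).ne' (hr0 x hpos).ne']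
    _ = ∑ i, negMulLog (q i) + ∑ j, negMulLog (r j) := by
        simp only [Finset.sum_add_distrib, Fintype.sum_prod_type, ← Finset.sum_mul]
        rw [Finset.sum_comm (f := fun i j => p (i, j) * log (r j))]
        simp only [← Finset.sum_mul, negMulLog, neg_mul, Finset.sum_neg_distrib, q, r]
        ring

end Shannon

section UnitaryDiagonalization

variable {n : Type*} [Fintype n] [DecidableEq n]

lemma diagonal_comp_mul_eq_mul_diagonal_comp {a b : n → ℝ} {M : Matrix n n ℂ} (f : ℝ → ℝ)
    (h : diagonal (fun i => (a i : ℂ)) * M = M * diagonal (fun i => (b i : ℂ))) :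
    diagonal (fun i => (f (a i) : ℂ)) * M = M * diagonal (fun i => (f (b i) : ℂ)) := by
  ext i j
  have hij := congr_fun₂ h i j
  simp only [diagonal_mul, mul_diagonal] at hij ⊢
  by_cases hM : M i j = 0
  · simp [hM]
  · have hab : a i = b j := by exact_mod_cast mul_right_cancel₀ hM (hij.trans (mul_comm _ _))
    rw [hab, mul_comm]

lemma Matrix.IsHermitian.eq_eigenvectorUnitary_mul_diagonal_mul_star {A : Matrix n n ℂ}
    (hA : A.IsHermitian) :
    A = (hA.eigenvectorUnitary : Matrix n n ℂ) * diagonal (fun i => (hA.eigenvalues i : ℂ)) *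
      star (hA.eigenvectorUnitary : Matrix n n ℂ) := by
  simpa [Function.comp_def] using hA.spectral_theorem

lemma Matrix.IsHermitian.star_eigenvectorUnitary_mul_mul_eigenvectorUnitary {A : Matrix n n ℂ}
    (hA : A.IsHermitian) :
    star (hA.eigenvectorUnitary : Matrix n n ℂ) * A * (hA.eigenvectorUnitary : Matrix n n ℂ) =
      diagonal (fun i => (hA.eigenvalues i : ℂ)) := by
  simpa [Function.comp_def] using hA.conjStarAlgAut_star_eigenvectorUnitary

lemma normSq_mem_doublyStochastic {U : Matrix n n ℂ} (hU : U ∈ unitaryGroup n ℂ) :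
    (of fun i j => Complex.normSq (U i j)) ∈ doublyStochastic ℝ n := by
  refine mem_doublyStochastic_iff_sum.mpr ⟨fun i j => Complex.normSq_nonneg _, fun i => ?_,
    fun j => ?_⟩
  · have h := congr_fun₂ (mem_unitaryGroup_iff.mp hU) i i
    simp only [mul_apply, star_apply, one_apply_eq, Complex.star_def, Complex.mul_conj] at h
    exact_mod_cast h
  · have h := congr_fun₂ (mem_unitaryGroup_iff'.mp hU) j j
    simp only [mul_apply, star_apply, one_apply_eq, Complex.star_def, mul_comm (starRingEnd ℂ _),
      Complex.mul_conj] at h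
    exact_mod_cast h

lemma re_diag_mul_diagonal_mul_star (U : Matrix n n ℂ) (μ : n → ℝ) (i : n) :
    ((U * diagonal (fun k => (μ k : ℂ)) * star U) i i).re =
      ((of fun i j => Complex.normSq (U i j)) *ᵥ μ) i := by
  rw [mul_apply, Complex.re_sum, mulVec, dotProduct]
  refine Finset.sum_congr rfl fun k _ => ?_
  rw [mul_diagonal, star_apply, Complex.star_def, mul_right_comm, Complex.mul_conj,
    ← Complex.ofReal_mul, Complex.ofReal_re, of_apply]

lemma kronecker_mul_diagonal_mul_star {m : Type*} [Fintype m] [DecidableEq m] (V : Matrix n n ℂ)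
    (W : Matrix m m ℂ) (l : n → ℝ) (μ : m → ℝ) :
    (V * diagonal (fun i => (l i : ℂ)) * star V) ⊗ₖ (W * diagonal (fun j => (μ j : ℂ)) * star W) =
      (V ⊗ₖ W) * diagonal (fun x => ((l x.1 * μ x.2 : ℝ) : ℂ)) * star (V ⊗ₖ W) := by
  simp only [Complex.ofReal_mul]
  rw [← diagonal_kronecker_diagonal (fun i => (l i : ℂ)) (fun j => (μ j : ℂ)),
    star_eq_conjTranspose, star_eq_conjTranspose, star_eq_conjTranspose, conjTranspose_kronecker,
    mul_kronecker_mul, mul_kronecker_mul]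

end UnitaryDiagonalization

section Entropy

variable {n : Type*} [Fintype n] [DecidableEq n]

lemma matfun_unitary_mul_diagonal_mul_star (f : ℝ → ℝ) {W : Matrix n n ℂ}
    (hW : W ∈ unitaryGroup n ℂ) (μ : n → ℝ) :
    matfun f (W * diagonal (fun i => (μ i : ℂ)) * star W) =
      W * diagonal (fun i => (f (μ i) : ℂ)) * star W := by
  set A := W * diagonal (fun i => (μ i : ℂ)) * star W
  have hA : A.IsHermitian :=
    isHermitian_mul_mul_conjTranspose W
      (isHermitian_diagonal_iff.mpr fun i => Complex.conj_ofReal (μ i))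
  set V : Matrix n n ℂ := ↑hA.eigenvectorUnitary
  have hWW := mem_unitaryGroup_iff'.mp hW
  have hVV : V * star V = 1 := mem_unitaryGroup_iff.mp hA.eigenvectorUnitary.2
  -- `star V * W` intertwines the two diagonalizations of `A`, hence also their images under `f`
  have hint : diagonal (fun i => (hA.eigenvalues i : ℂ)) * (star V * W) =
      (star V * W) * diagonal (fun i => (μ i : ℂ)) :=
    calc diagonal (fun i => (hA.eigenvalues i : ℂ)) * (star V * W)
        = star V * A * (V * star V) * W := by
          rw [← hA.star_eigenvectorUnitary_mul_mul_eigenvectorUnitary]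
          simp only [V, Matrix.mul_assoc]
      _ = (star V * W) * diagonal (fun i => (μ i : ℂ)) := by
          simp only [hVV, A, Matrix.mul_assoc, hWW, Matrix.mul_one]
  rw [matfun, dif_pos hA]
  calc V * diagonal (fun i => (f (hA.eigenvalues i) : ℂ)) * star V
      = V * (diagonal (fun i => (f (hA.eigenvalues i) : ℂ)) * (star V * W)) * star W := by
        simp only [Matrix.mul_assoc, mem_unitaryGroup_iff.mp hW, Matrix.mul_one]
    _ = V * ((star V * W) * diagonal (fun i => (f (μ i) : ℂ))) * star W := by
        rw [diagonal_comp_mul_eq_mul_diagonal_comp f hint]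
    _ = W * diagonal (fun i => (f (μ i) : ℂ)) * star W := by
        simp only [← Matrix.mul_assoc, hVV, Matrix.one_mul]

lemma entropy_unitary_mul_diagonal_mul_star {W : Matrix n n ℂ} (hW : W ∈ unitaryGroup n ℂ)
    (μ : n → ℝ) :
    entropy (W * diagonal (fun i => (μ i : ℂ)) * star W) = ∑ i, negMulLog (μ i) := by
  have hWW := mem_unitaryGroup_iff'.mp hW
  have hprod : W * diagonal (fun i => (μ i : ℂ)) * star W *
      (W * diagonal (fun i => (log (μ i) : ℂ)) * star W) =
      W * diagonal (fun i => ((μ i * log (μ i) : ℝ) : ℂ)) * star W := by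
    simp only [Matrix.mul_assoc, ← Matrix.mul_assoc (star W), hWW, Matrix.one_mul,
      ← Matrix.mul_assoc (diagonal _), diagonal_mul_diagonal, Complex.ofReal_mul]
  rw [entropy, mlog, matfun_unitary_mul_diagonal_mul_star _ hW, hprod, trace_mul_cycle, hWW,
    Matrix.one_mul, trace_diagonal, Complex.re_sum, ← Finset.sum_neg_distrib]
  simp [negMulLog]

lemma entropy_eq_sum_negMulLog_eigenvalues {A : Matrix n n ℂ} (hA : A.IsHermitian) :
    entropy A = ∑ i, negMulLog (hA.eigenvalues i) := by
  conv_lhs => rw [hA.eq_eigenvectorUnitary_mul_diagonal_mul_star]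
  exact entropy_unitary_mul_diagonal_mul_star hA.eigenvectorUnitary.2 _

lemma entropy_unitary_conj {A U : Matrix n n ℂ} (hA : A.IsHermitian) (hU : U ∈ unitaryGroup n ℂ) :
    entropy (U * A * star U) = entropy A := by
  rw [entropy_eq_sum_negMulLog_eigenvalues hA,
    ← entropy_unitary_mul_diagonal_mul_star (mul_mem hU hA.eigenvectorUnitary.2)]
  conv_lhs => rw [hA.eq_eigenvectorUnitary_mul_diagonal_mul_star]
  simp only [star_mul, Matrix.mul_assoc]

lemma entropy_le_sum_negMulLog_diag {A : Matrix n n ℂ} (hA : A.PosSemidef) :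
    entropy A ≤ ∑ i, negMulLog (A i i).re := by
  rw [entropy_eq_sum_negMulLog_eigenvalues hA.isHermitian]
  conv_rhs => rw [hA.isHermitian.eq_eigenvectorUnitary_mul_diagonal_mul_star]
  simp only [re_diag_mul_diagonal_mul_star]
  exact sum_negMulLog_le_sum_negMulLog_mulVec
    (normSq_mem_doublyStochastic hA.isHermitian.eigenvectorUnitary.2) hA.eigenvalues_nonneg

end Entropy

section States

variable {n m : Type*} [Fintype n] [Fintype m]

lemma IsState.isHermitian {ρ : Matrix n n ℂ} (hρ : IsState ρ) : ρ.IsHermitian :=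
  hρ.1.isHermitian

lemma IsState.kronecker {A : Matrix n n ℂ} {B : Matrix m m ℂ} (hA : IsState A) (hB : IsState B) :
    IsState (A ⊗ₖ B) :=
  ⟨hA.1.kronecker hB.1, by rw [trace_kronecker, hA.2, hB.2, one_mul]⟩

variable [DecidableEq n] [DecidableEq m]

lemma IsState.unitary_conj {ρ U : Matrix n n ℂ} (hρ : IsState ρ) (hU : U ∈ unitaryGroup n ℂ) :
    IsState (U * ρ * star U) :=
  ⟨by simpa only [star_eq_conjTranspose] using hρ.1.mul_mul_conjTranspose_same U,
    by rw [trace_mul_cycle, mem_unitaryGroup_iff'.mp hU, Matrix.one_mul, hρ.2]⟩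

lemma IsState.sum_eigenvalues {ρ : Matrix n n ℂ} (hρ : IsState ρ) :
    ∑ i, hρ.isHermitian.eigenvalues i = 1 := by
  have h := hρ.isHermitian.trace_eq_sum_eigenvalues
  rw [hρ.2, ← RCLike.ofReal_sum] at h
  exact RCLike.ofReal_injective (h.symm.trans RCLike.ofReal_one.symm)

lemma entropy_kronecker {A : Matrix n n ℂ} {B : Matrix m m ℂ} (hA : IsState A) (hB : IsState B) :
    entropy (A ⊗ₖ B) = entropy A + entropy B := by
  have hA' := hA.isHermitian
  have hB' := hB.isHermitian
  conv_lhs => rw [hA'.eq_eigenvectorUnitary_mul_diagonal_mul_star,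
    hB'.eq_eigenvectorUnitary_mul_diagonal_mul_star, kronecker_mul_diagonal_mul_star]
  rw [entropy_unitary_mul_diagonal_mul_star
      (kronecker_mem_unitary hA'.eigenvectorUnitary.2 hB'.eigenvectorUnitary.2),
    sum_negMulLog_mul hA.sum_eigenvalues hB.sum_eigenvalues,
    entropy_eq_sum_negMulLog_eigenvalues, entropy_eq_sum_negMulLog_eigenvalues]

end States

lemma kronecker_submatrix_swap {a b : Type*} (V : Matrix a a ℂ) (W : Matrix b b ℂ) :
    (V ⊗ₖ W).submatrix Prod.swap Prod.swap = W ⊗ₖ V := by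
  ext x y
  simp [mul_comm]

section PartialTrace

variable {a b : Type*} [Fintype a] [Fintype b]

lemma trR_eq_sum_submatrix (ρ : Matrix (a × b) (a × b) ℂ) :
    trR ρ = ∑ k, ρ.submatrix (·, k) (·, k) := by
  ext i j
  simp [trR, Matrix.sum_apply]

lemma trL_eq_trR_submatrix_swap (ρ : Matrix (a × b) (a × b) ℂ) :
    trL ρ = trR (ρ.submatrix Prod.swap Prod.swap) :=
  rfl

lemma Matrix.PosSemidef.trR {ρ : Matrix (a × b) (a × b) ℂ} (hρ : ρ.PosSemidef) :
    (trR ρ).PosSemidef :=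
  trR_eq_sum_submatrix ρ ▸ posSemidef_sum _ fun _ _ => hρ.submatrix _

lemma Matrix.PosSemidef.trL {ρ : Matrix (a × b) (a × b) ℂ} (hρ : ρ.PosSemidef) :
    (trL ρ).PosSemidef :=
  (hρ.submatrix Prod.swap).trR

lemma trR_kronecker_one_mul [DecidableEq b] (A : Matrix a a ℂ) (ρ : Matrix (a × b) (a × b) ℂ) :
    trR ((A ⊗ₖ (1 : Matrix b b ℂ)) * ρ) = A * trR ρ := by
  ext i j
  simp only [trR, of_apply, mul_apply, kroneckerMap_apply, one_apply, Fintype.sum_prod_type,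
    mul_ite, ite_mul, mul_one, mul_zero, zero_mul, Finset.sum_ite_eq, Finset.mem_univ, if_true,
    Finset.mul_sum]
  exact Finset.sum_comm

lemma trR_mul_kronecker_one [DecidableEq b] (ρ : Matrix (a × b) (a × b) ℂ) (B : Matrix a a ℂ) :
    trR (ρ * (B ⊗ₖ (1 : Matrix b b ℂ))) = trR ρ * B := by
  ext i j
  simp only [trR, of_apply, mul_apply, kroneckerMap_apply, one_apply, Fintype.sum_prod_type,
    mul_ite, mul_one, mul_zero, Finset.sum_ite_eq', Finset.mem_univ, if_true, Finset.sum_mul]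
  exact Finset.sum_comm

lemma trR_mul_one_kronecker [DecidableEq a] (ρ : Matrix (a × b) (a × b) ℂ) (C : Matrix b b ℂ) :
    trR (ρ * ((1 : Matrix a a ℂ) ⊗ₖ C)) = trR (((1 : Matrix a a ℂ) ⊗ₖ C) * ρ) := by
  ext i j
  simp only [trR, of_apply, mul_apply, kroneckerMap_apply, one_apply, Fintype.sum_prod_type,
    mul_ite, ite_mul, one_mul, mul_zero, zero_mul, Finset.sum_ite_eq, Finset.sum_ite_eq',
    Finset.mem_univ, if_true, Finset.sum_ite_irrel, Finset.sum_const_zero]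
  simp_rw [mul_comm (ρ _ _)]
  exact Finset.sum_comm

variable [DecidableEq a] [DecidableEq b]

lemma trR_star_kronecker_mul_mul_kronecker (ρ : Matrix (a × b) (a × b) ℂ) (V : Matrix a a ℂ)
    {W : Matrix b b ℂ} (hW : W ∈ unitaryGroup b ℂ) :
    trR (star (V ⊗ₖ W) * ρ * (V ⊗ₖ W)) = star V * trR ρ * V := by
  have hstar : star (V ⊗ₖ W) = (star V ⊗ₖ (1 : Matrix b b ℂ)) * (1 ⊗ₖ star W) := by
    rw [← mul_kronecker_mul, Matrix.mul_one, Matrix.one_mul, star_eq_conjTranspose,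
      conjTranspose_kronecker]
    rfl
  have hVW : V ⊗ₖ W = ((1 : Matrix a a ℂ) ⊗ₖ W) * (V ⊗ₖ (1 : Matrix b b ℂ)) := by
    rw [← mul_kronecker_mul, Matrix.mul_one, Matrix.one_mul]
  have hsplit : star (V ⊗ₖ W) * ρ * (V ⊗ₖ W) =
      (star V ⊗ₖ (1 : Matrix b b ℂ)) * (((1 : Matrix a a ℂ) ⊗ₖ star W) * ρ * (1 ⊗ₖ W)) *
        (V ⊗ₖ 1) := by
    rw [hstar, hVW]
    simp only [Matrix.mul_assoc]
  rw [hsplit, trR_mul_kronecker_one, trR_kronecker_one_mul, trR_mul_one_kronecker,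
    ← Matrix.mul_assoc, ← mul_kronecker_mul, mem_unitaryGroup_iff.mp hW,
    Matrix.mul_one, one_kronecker_one, Matrix.one_mul]

lemma trL_star_kronecker_mul_mul_kronecker (ρ : Matrix (a × b) (a × b) ℂ) {V : Matrix a a ℂ}
    (hV : V ∈ unitaryGroup a ℂ) (W : Matrix b b ℂ) :
    trL (star (V ⊗ₖ W) * ρ * (V ⊗ₖ W)) = star W * trL ρ * W := by
  rw [trL_eq_trR_submatrix_swap, trL_eq_trR_submatrix_swap,
    ← trR_star_kronecker_mul_mul_kronecker _ _ hV, ← kronecker_submatrix_swap V W,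
    star_eq_conjTranspose, star_eq_conjTranspose, conjTranspose_submatrix,
    ← Equiv.coe_prodComm b a, ← submatrix_mul_equiv (e₂ := Equiv.prodComm b a),
    ← submatrix_mul_equiv (e₂ := Equiv.prodComm b a)]

theorem entropy_le_entropy_trR_add_entropy_trL {ρ : Matrix (a × b) (a × b) ℂ} (hρ : IsState ρ) :
    entropy ρ ≤ entropy (trR ρ) + entropy (trL ρ) := by
  have hA := hρ.1.trR.isHermitian
  have hB := hρ.1.trL.isHermitian
  set V : Matrix a a ℂ := ↑hA.eigenvectorUnitary
  set W : Matrix b b ℂ := ↑hB.eigenvectorUnitary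
  have hV : V ∈ unitaryGroup a ℂ := hA.eigenvectorUnitary.2
  have hW : W ∈ unitaryGroup b ℂ := hB.eigenvectorUnitary.2
  have hT : star (V ⊗ₖ W) ∈ unitaryGroup (a × b) ℂ :=
    Unitary.star_mem (kronecker_mem_unitary hV hW)
  set τ := star (V ⊗ₖ W) * ρ * (V ⊗ₖ W)
  have hτ : IsState τ := by simpa only [star_star] using hρ.unitary_conj hT
  have hτA : ∀ i, hA.eigenvalues i = ∑ k, (τ (i, k) (i, k)).re := by
    have h : trR τ = diagonal (fun i => (hA.eigenvalues i : ℂ)) := by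
      rw [trR_star_kronecker_mul_mul_kronecker _ _ hW,
        hA.star_eigenvectorUnitary_mul_mul_eigenvectorUnitary]
    intro i
    simpa [trR, Complex.re_sum] using congrArg Complex.re (congr_fun₂ h i i).symm
  have hτB : ∀ k, hB.eigenvalues k = ∑ i, (τ (i, k) (i, k)).re := by
    have h : trL τ = diagonal (fun k => (hB.eigenvalues k : ℂ)) := by
      rw [trL_star_kronecker_mul_mul_kronecker _ hV,
        hB.star_eigenvectorUnitary_mul_mul_eigenvectorUnitary]
    intro k
    simpa [trL, Complex.re_sum] using congrArg Complex.re (congr_fun₂ h k k).symm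
  have hτ1 : ∑ x, (τ x x).re = 1 := by
    simpa only [trace, diag_apply, Complex.re_sum, Complex.one_re] using congrArg Complex.re hτ.2
  calc entropy ρ = entropy τ := by
        simpa only [star_star] using (entropy_unitary_conj hρ.isHermitian hT).symm
    _ ≤ ∑ x, negMulLog (τ x x).re := entropy_le_sum_negMulLog_diag hτ.1
    _ ≤ ∑ i, negMulLog (∑ k, (τ (i, k) (i, k)).re) + ∑ k, negMulLog (∑ i, (τ (i, k) (i, k)).re) :=
        sum_negMulLog_le_add_marginals (fun x => (Complex.nonneg_iff.mp hτ.1.diag_nonneg).1) hτ1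
    _ = entropy (trR ρ) + entropy (trL ρ) := by
        simp only [← hτA, ← hτB, entropy_eq_sum_negMulLog_eigenvalues hA,
          entropy_eq_sum_negMulLog_eigenvalues hB]

end PartialTrace

theorem second_law_with_memory {dS dM d : ℕ}
    (ρSM : Matrix (Fin dS × Fin dM) (Fin dS × Fin dM) ℂ) (hSM : IsState ρSM)
    (ρR : Matrix (Fin d) (Fin d) ℂ) (hR : IsState ρR)
    (U : Matrix ((Fin dS × Fin dM) × Fin d) ((Fin dS × Fin dM) × Fin d) ℂ)
    (hU : U ∈ Matrix.unitaryGroup ((Fin dS × Fin dM) × Fin d) ℂ) :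
    let ρ' := U * (ρSM ⊗ₖ ρR) * star U
    let Δ := entropy (trL ρ') - entropy ρR
    let ΔScond := (entropy ρSM - entropy (trL ρSM)) -
      (entropy (trR ρ') - entropy (trL (trR ρ')))
    entropy (trL (trR ρ')) ≤ entropy (trL ρSM) →
      ΔScond + mutInfo ρ' ≤ Δ ∧ ΔScond ≤ ΔScond + mutInfo ρ' := by
  intro ρ' Δ ΔScond hM
  have hjoint : entropy ρ' = entropy ρSM + entropy ρR := by
    rw [entropy_unitary_conj (hSM.kronecker hR).isHermitian hU, entropy_kronecker hSM hR]
  have hI : 0 ≤ mutInfo ρ' :=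
    sub_nonneg.mpr (entropy_le_entropy_trR_add_entropy_trL ((hSM.kronecker hR).unitary_conj hU))
  refine ⟨?_, le_add_of_nonneg_right hI⟩
  simp only [Δ, ΔScond, mutInfo]
  linarith
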